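/- arXiv:2408.04890 — 2 statements merged into one kernel-verified Lean document; each statement's English description precedes it below -/
import Mathlib

section
/- For Φ(t) = tᵖ ln(1+t) with p ≥ 1, the Orlicz indices are p⁻_Φ = p and p⁺_Φ = p+1. -/
/-!
Differentiating `Φ(t) = tᵖ log(1 + t)` gives `t φ(t) / Φ(t) = p + g(t)` with
`g(t) = t / ((1 + t) log(1 + t))`. The inequality `t / (1 + t) < log(1 + t) < t` gives
`1 / (1 + t) < g(t) < 1`, while `g(t) ≤ 1 / log(1 + t)`; hence `g` takes values in `(0, 1)`,
tends to `0` as `t → ∞` and to `1` as `t → 0⁺`, so the index set has infimum `p` and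
supremum `p + 1`.
-/

open MeasureTheory Real Set Filter
open scoped ENNReal

/-- An Orlicz function, given by its right-continuous derivative `phi`. -/
structure OrliczFunction where
  phi : ℝ → ℝ
  mono : MonotoneOn phi (Set.Ici 0)
  rightCont : ∀ t, 0 ≤ t → ContinuousWithinAt phi (Set.Ici t) t
  map_zero : phi 0 = 0
  pos : ∀ t, 0 < t → 0 < phi t
  tendsto_atTop : Filter.Tendsto phi Filter.atTop Filter.atTop
  delta2 : ∃ C > 0, ∀ t, 0 ≤ t →
    (∫ s in (0:ℝ)..(2 * t), phi s) ≤ C * ∫ s in (0:ℝ)..t, phi s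

/-- The Orlicz function itself: `Φ(t) = ∫₀ᵗ φ(s) ds`. -/
noncomputable def OrliczFunction.Phi (O : OrliczFunction) (t : ℝ) : ℝ :=
  ∫ s in (0:ℝ)..t, O.phi s

/-- The set `{ tφ(t)/Φ(t) : t > 0 }` used to define the Orlicz indices. -/
def OrliczFunction.indexSet (O : OrliczFunction) : Set ℝ :=
  {r | ∃ t, 0 < t ∧ r = t * O.phi t / O.Phi t}

/-- Upper Orlicz index `p⁺_Φ`. -/
noncomputable def OrliczFunction.pPlus (O : OrliczFunction) : ℝ := sSup O.indexSet

/-- Lower Orlicz index `p⁻_Φ`. -/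
noncomputable def OrliczFunction.pMinus (O : OrliczFunction) : ℝ := sInf O.indexSet

/-- Euclidean space `ℝᴺ`. -/
noncomputable abbrev E (N : ℕ) := EuclideanSpace ℝ (Fin N)

/-- Last coordinate `x_N` of `x ∈ ℝᴺ`. -/
noncomputable def lastCoord {N : ℕ} (hN : 0 < N) (x : E N) : ℝ :=
  x ⟨N - 1, Nat.sub_lt hN Nat.one_pos⟩

/-- First `N-1` coordinates `x′` of `x ∈ ℝᴺ`. -/
noncomputable def firstCoords {N : ℕ} (x : E N) : E (N - 1) :=
  WithLp.toLp 2 (fun i => x (Fin.castLE (Nat.sub_le N 1) i))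

/-- The cube `Ω_{n,T} = (-n,n)^{N-1} × (0,T)`. -/
def cube {N : ℕ} (hN : 0 < N) (n T : ℝ) : Set (E N) :=
  {x | (∀ i, firstCoords x i ∈ Set.Ioo (-n) n) ∧ lastCoord hN x ∈ Set.Ioo 0 T}

/-- The domain above the graph of `γ : ℝ^{N-1} → ℝ`. -/
def aboveGraph {N : ℕ} (hN : 0 < N) (γ : E (N - 1) → ℝ) : Set (E N) :=
  {x | γ (firstCoords x) < lastCoord hN x}

/-- The fractional Orlicz Gagliardo modular `∫_Ω∫_Ω Φ(|D_s u(x,y)|) dμ`. -/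
noncomputable def fracModular {N : ℕ} (O : OrliczFunction) (s : ℝ) (Ω : Set (E N))
    (u : E N → ℝ) : ℝ :=
  ∫ x in Ω, ∫ y in Ω, O.Phi (|u x - u y| / dist x y ^ s) / dist x y ^ N

/-- The weighted fractional Orlicz modular `∫_Ω∫_Ω Φ(|D_s u| x_N^{α₁} y_N^{α₂}) dμ`. -/
noncomputable def fracModularW {N : ℕ} (O : OrliczFunction) (s α₁ α₂ : ℝ) (hN : 0 < N)
    (Ω : Set (E N)) (u : E N → ℝ) : ℝ :=
  ∫ x in Ω, ∫ y in Ω,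
    O.Phi (|u x - u y| / dist x y ^ s * lastCoord hN x ^ α₁ * lastCoord hN y ^ α₂) /
      dist x y ^ N

/-- `u ∈ C¹_c(Ω)`. -/
def IsCc1 {N : ℕ} (Ω : Set (E N)) (u : E N → ℝ) : Prop :=
  ContDiff ℝ 1 u ∧ HasCompactSupport u ∧ tsupport u ⊆ Ω

/-- A bounded Lipschitz domain: near each boundary point, up to an isometry, the set
coincides with the region above the graph of a Lipschitz function. -/
def IsBoundedLipschitzDomain {N : ℕ} (hN : 0 < N) (Ω : Set (E N)) : Prop :=
  IsOpen Ω ∧ Bornology.IsBounded Ω ∧ Ω.Nonempty ∧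
    ∀ x ∈ frontier Ω, ∃ r > 0, ∃ T : E N ≃ᵢ E N, ∃ γ : E (N - 1) → ℝ, ∃ L : NNReal,
      LipschitzWith L γ ∧
        (T '' Ω) ∩ Metric.ball (T x) r = aboveGraph hN γ ∩ Metric.ball (T x) r

/-- distance to the boundary -/
noncomputable def distBd {N : ℕ} (Ω : Set (E N)) (x : E N) : ℝ :=
  Metric.infDist x (frontier Ω)

open Topology

lemma hasDerivAt_rpow_mul_log_one_add (p : ℝ) {t : ℝ} (ht : 0 < t) :
    HasDerivAt (fun s => s ^ p * log (1 + s))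
      (p * t ^ (p - 1) * log (1 + t) + t ^ p / (1 + t)) t := by
  have hlog : HasDerivAt (fun s => log (1 + s)) (1 / (1 + t)) t := by
    simpa using ((hasDerivAt_id t).const_add 1).log (by positivity)
  exact ((hasDerivAt_rpow_const (Or.inl ht.ne')).mul hlog).congr_deriv (by ring)

lemma lt_one_add_mul_log_one_add {t : ℝ} (ht : 0 < t) : t < (1 + t) * log (1 + t) := by
  have h1t : 0 < 1 + t := by positivity
  -- `log x < x - 1` at `x = (1 + t)⁻¹`
  have h := log_lt_sub_one_of_pos (inv_pos.mpr h1t) (inv_ne_one.mpr (by linarith))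
  rw [log_inv, inv_eq_one_div, lt_sub_iff_add_lt, lt_div_iff₀ h1t] at h
  linarith

lemma div_one_add_mul_log_one_add_mem_Ioo {t : ℝ} (ht : 0 < t) :
    t / ((1 + t) * log (1 + t)) ∈ Ioo 0 1 := by
  have hlog : 0 < log (1 + t) := log_pos (by linarith)
  exact ⟨by positivity, (div_lt_one (by positivity)).mpr (lt_one_add_mul_log_one_add ht)⟩

lemma tendsto_div_one_add_mul_log_one_add_atTop :
    Tendsto (fun t => t / ((1 + t) * log (1 + t))) atTop (𝓝 0) := by
  have hlog : Tendsto (fun t => (log (1 + t))⁻¹) atTop (𝓝 0) :=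
    (tendsto_log_atTop.comp (tendsto_atTop_add_const_left _ 1 tendsto_id)).inv_tendsto_atTop
  refine tendsto_of_tendsto_of_tendsto_of_le_of_le' tendsto_const_nhds hlog ?_ ?_
  · filter_upwards [eventually_gt_atTop 0] with t ht
    exact (div_one_add_mul_log_one_add_mem_Ioo ht).1.le
  · filter_upwards [eventually_gt_atTop 0] with t ht
    have hlog : 0 < log (1 + t) := log_pos (by linarith)
    calc t / ((1 + t) * log (1 + t)) ≤ (1 + t) / ((1 + t) * log (1 + t)) := by gcongr; linarith
      _ = (log (1 + t))⁻¹ := by field_simp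

lemma tendsto_div_one_add_mul_log_one_add_nhdsGT_zero :
    Tendsto (fun t => t / ((1 + t) * log (1 + t))) (𝓝[>] 0) (𝓝 1) := by
  have hinv : Tendsto (fun t : ℝ => 1 / (1 + t)) (𝓝[>] 0) (𝓝 1) := by
    have : ContinuousAt (fun t : ℝ => 1 / (1 + t)) 0 := by fun_prop (disch := norm_num)
    simpa using this.tendsto.mono_left nhdsWithin_le_nhds
  refine tendsto_of_tendsto_of_tendsto_of_le_of_le' hinv tendsto_const_nhds ?_ ?_
  · filter_upwards [self_mem_nhdsWithin] with t (ht : 0 < t)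
    have hlog : 0 < log (1 + t) := log_pos (by linarith)
    have hlt : log (1 + t) < t := by
      linarith [log_lt_sub_one_of_pos (by linarith : 0 < 1 + t) (by linarith)]
    rw [div_le_div_iff₀ (by positivity) (by positivity)]
    nlinarith
  · filter_upwards [self_mem_nhdsWithin] with t (ht : 0 < t)
    exact (div_one_add_mul_log_one_add_mem_Ioo ht).2.le

namespace OrliczFunction

lemma hasDerivWithinAt_Phi (O : OrliczFunction) {t : ℝ} (ht : 0 ≤ t) :
    HasDerivWithinAt O.Phi (O.phi t) (Ici t) t := by
  have hmono : MonotoneOn O.phi (Ici t) := O.mono.mono (Ici_subset_Ici.mpr ht)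
  have hint : IntervalIntegrable O.phi volume 0 t :=
    (O.mono.mono fun s hs => (uIcc_of_le ht ▸ hs).1).intervalIntegrable
  have hmeas : StronglyMeasurableAtFilter O.phi (𝓝[>] t) volume :=
    ⟨Ici t, mem_of_superset self_mem_nhdsWithin Ioi_subset_Ici_self,
      (aemeasurable_restrict_of_monotoneOn measurableSet_Ici hmono).aestronglyMeasurable⟩
  exact intervalIntegral.integral_hasDerivWithinAt_right hint hmeas
    ((O.rightCont t ht).mono Ioi_subset_Ici_self)

lemma phi_eq_of_hasDerivAt (O : OrliczFunction) {F : ℝ → ℝ} {t F' : ℝ}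
    (hF : EqOn O.Phi F (Ici 0)) (ht : 0 ≤ t) (hderiv : HasDerivAt F F' t) :
    O.phi t = F' := by
  have hderiv' : HasDerivWithinAt O.Phi F' (Ici t) t :=
    hderiv.hasDerivWithinAt.congr (fun s hs => hF (ht.trans hs)) (hF ht)
  exact (uniqueDiffWithinAt_Ici t).eq_deriv _ (O.hasDerivWithinAt_Phi ht) hderiv'

lemma indexSet_eq_of_Phi_eq_rpow_mul_log (O : OrliczFunction) {p : ℝ}
    (hPhi : ∀ t : ℝ, 0 ≤ t → O.Phi t = t ^ p * log (1 + t)) :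
    O.indexSet = (fun t => p + t / ((1 + t) * log (1 + t))) '' Ioi 0 := by
  have hratio : ∀ t : ℝ, 0 < t →
      t * O.phi t / O.Phi t = p + t / ((1 + t) * log (1 + t)) := by
    intro t ht
    have hlog : 0 < log (1 + t) := log_pos (by linarith)
    rw [O.phi_eq_of_hasDerivAt (fun s hs => hPhi s hs) ht.le
      (hasDerivAt_rpow_mul_log_one_add p ht), hPhi t ht.le, rpow_sub_one ht.ne']
    field_simp
  ext r
  exact exists_congr fun t => and_congr_right fun ht => by rw [hratio t ht, eq_comm]

end OrliczFunction

theorem stmt4_general (O : OrliczFunction) (p : ℝ)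
    (hPhi : ∀ t : ℝ, 0 ≤ t → O.Phi t = t ^ p * Real.log (1 + t)) :
    O.pMinus = p ∧ O.pPlus = p + 1 := by
  set g : ℝ → ℝ := fun t => t / ((1 + t) * log (1 + t))
  have hset : O.indexSet = (fun t => p + g t) '' Ioi 0 :=
    O.indexSet_eq_of_Phi_eq_rpow_mul_log hPhi
  have hne : O.indexSet.Nonempty := hset ▸ nonempty_Ioi.image _
  have hg_mem : ∀ r ∈ O.indexSet, r - p ∈ Ioo 0 1 := by
    rw [hset]
    rintro _ ⟨t, ht, rfl⟩
    simpa using div_one_add_mul_log_one_add_mem_Ioo ht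
  have hlimit : ∀ {l : Filter ℝ} [l.NeBot] {a : ℝ}, Tendsto g l (𝓝 a) →
      (∀ᶠ t in l, 0 < t) → p + a ∈ closure O.indexSet := fun hg hpos =>
    mem_closure_of_tendsto (tendsto_const_nhds.add hg)
      (hpos.mono fun t ht => hset ▸ mem_image_of_mem _ ht)
  constructor
  · refine (isGLB_of_mem_closure (fun r hr => ?_) ?_).csInf_eq hne
    · linarith [(hg_mem r hr).1]
    · simpa using hlimit tendsto_div_one_add_mul_log_one_add_atTop (eventually_gt_atTop 0)
  · refine (isLUB_of_mem_closure (fun r hr => ?_) ?_).csSup_eq hne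
    · linarith [(hg_mem r hr).2]
    · exact hlimit tendsto_div_one_add_mul_log_one_add_nhdsGT_zero self_mem_nhdsWithin

theorem stmt4 (O : OrliczFunction) (p : ℝ) (hp : 1 ≤ p)
    (hPhi : ∀ t : ℝ, 0 ≤ t → O.Phi t = t ^ p * Real.log (1 + t)) :
    O.pMinus = p ∧ O.pPlus = p + 1 :=
  stmt4_general O p hPhi
end

section
/- Let Ω ⊂ ℝᴺ be open, s ∈ (0,1), and ξ ∈ C^{0,1}(Ω) with 0 ≤ ξ ≤ 1. For any Orlicz function Φ there exists C = C(s,N,Φ,Ω) > 0 such that for all u ∈ W^{s,Φ}(Ω): ∫_Ω Φ(|ξu|) dx + ∫_Ω∫_Ω Φ(|ξ(x)u(x)−ξ(y)u(y)|/|x−y|ˢ) dμ ≤ C ∫_Ω Φ(|u|) dx + C ∫_Ω∫_Ω Φ(|u(x)−u(y)|/|x−y|ˢ) dμ, where dμ = dx dy/|x−y|ᴺ. -/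
open MeasureTheory Real Set Filter
open scoped ENNReal

/-! Write `ξ(x)u(x) − ξ(y)u(y) = ξ(y)(u(x) − u(y)) + (ξ(x) − ξ(y))u(x)` and use
`|ξ(x) − ξ(y)| ≤ max(L, 1) · min(1, |x − y|)`. The Δ₂ condition together with `Φ(λt) ≤ λΦ(t)` for
`0 ≤ λ ≤ 1` then bounds the integrand of the Gagliardo modular of `ξu` by a multiple of that of `u`
plus `Φ(|u(x)|)` times the kernel `min(1, |x − y|) |x − y|^(−s−N)`. This kernel is integrable on
`ℝᴺ` (it behaves like `|z|^(1−s−N)` near `0` and like `|z|^(−s−N)` at infinity), so integrating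
first in `y` and then in `x` gives the bound; the `L^Φ` term only shrinks since `0 ≤ ξ ≤ 1`. -/

namespace OrliczFunction

variable (O : OrliczFunction)

lemma phi_nonneg {t : ℝ} (ht : 0 ≤ t) : 0 ≤ O.phi t := by
  simpa only [O.map_zero] using O.mono self_mem_Ici ht ht

lemma intervalIntegrable_phi {a b : ℝ} (ha : 0 ≤ a) (hb : 0 ≤ b) :
    IntervalIntegrable O.phi volume a b :=
  (O.mono.mono fun _ hx => (le_min ha hb).trans hx.1).intervalIntegrable

lemma Phi_nonneg {t : ℝ} (ht : 0 ≤ t) : 0 ≤ O.Phi t :=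
  intervalIntegral.integral_nonneg ht fun _ hx => O.phi_nonneg hx.1

lemma Phi_mono {a b : ℝ} (ha : 0 ≤ a) (hab : a ≤ b) : O.Phi a ≤ O.Phi b := by
  have hb := ha.trans hab
  rw [Phi, Phi, ← intervalIntegral.integral_add_adjacent_intervals (O.intervalIntegrable_phi
    le_rfl ha) (O.intervalIntegrable_phi ha hb), le_add_iff_nonneg_right]
  exact intervalIntegral.integral_nonneg hab fun _ hx => O.phi_nonneg (ha.trans hx.1)

lemma Phi_mul_le {l t : ℝ} (hl0 : 0 ≤ l) (hl1 : l ≤ 1) (ht : 0 ≤ t) :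
    O.Phi (l * t) ≤ l * O.Phi t := by
  rcases hl0.eq_or_lt with rfl | hl
  · simp [Phi]
  have hscale : O.Phi (l * t) = l * ∫ x in (0:ℝ)..t, O.phi (l * x) := by
    rw [Phi, intervalIntegral.integral_comp_mul_left _ hl.ne', mul_zero, smul_eq_mul,
      ← mul_assoc, mul_inv_cancel₀ hl.ne', one_mul]
  have hmono : ∀ x ∈ Icc 0 t, O.phi (l * x) ≤ O.phi x := fun x hx =>
    O.mono (mem_Ici.mpr (by nlinarith [hx.1])) hx.1 (by nlinarith [hx.1])
  rw [hscale]
  gcongr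
  refine intervalIntegral.integral_mono_on ht ?_ (O.intervalIntegrable_phi le_rfl ht) hmono
  refine MonotoneOn.intervalIntegrable fun a ha b hb hab => ?_
  rw [uIcc_of_le ht] at ha hb
  exact O.mono (mem_Ici.mpr (by nlinarith [ha.1])) (mem_Ici.mpr (by nlinarith [hb.1]))
    (by nlinarith)

lemma exists_Phi_two_mul_le : ∃ C, 0 ≤ C ∧ ∀ t, 0 ≤ t → O.Phi (2 * t) ≤ C * O.Phi t := by
  obtain ⟨C, hC, h⟩ := O.delta2
  exact ⟨C, hC.le, h⟩

lemma exists_Phi_mul_le {K : ℝ} (hK : 0 ≤ K) :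
    ∃ C, 0 ≤ C ∧ ∀ t, 0 ≤ t → O.Phi (K * t) ≤ C * O.Phi t := by
  obtain ⟨C, hC0, hC⟩ := O.exists_Phi_two_mul_le
  obtain ⟨n, hn⟩ := pow_unbounded_of_one_lt K (one_lt_two (α := ℝ))
  have hpow : ∀ m : ℕ, ∀ t, 0 ≤ t → O.Phi (2 ^ m * t) ≤ C ^ m * O.Phi t := by
    intro m
    induction m with
    | zero => simp
    | succ m ih =>
      intro t ht
      calc O.Phi (2 ^ (m + 1) * t) = O.Phi (2 ^ m * (2 * t)) := by ring_nf
        _ ≤ C ^ m * O.Phi (2 * t) := ih _ (by positivity)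
        _ ≤ C ^ m * (C * O.Phi t) := by gcongr; exact hC t ht
        _ = C ^ (m + 1) * O.Phi t := by ring
  refine ⟨C ^ n, by positivity, fun t ht => ?_⟩
  calc O.Phi (K * t) ≤ O.Phi (2 ^ n * t) := O.Phi_mono (by positivity) (by gcongr)
    _ ≤ C ^ n * O.Phi t := hpow n t ht

lemma Phi_add_le {a b C : ℝ} (ha : 0 ≤ a) (hb : 0 ≤ b) (hC0 : 0 ≤ C)
    (hC : ∀ t, 0 ≤ t → O.Phi (2 * t) ≤ C * O.Phi t) :
    O.Phi (a + b) ≤ C * O.Phi a + C * O.Phi b := by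
  have hΦa := mul_nonneg hC0 (O.Phi_nonneg ha)
  have hΦb := mul_nonneg hC0 (O.Phi_nonneg hb)
  rcases le_total a b with h | h
  · linarith [O.Phi_mono (by positivity) (by linarith : a + b ≤ 2 * b), hC b hb]
  · linarith [O.Phi_mono (by positivity) (by linarith : a + b ≤ 2 * a), hC a ha]

end OrliczFunction

section Kernel

variable {V : Type*} [NormedAddCommGroup V] [NormedSpace ℝ V] [MeasurableSpace V] [BorelSpace V]
  [FiniteDimensional ℝ V] (μ : Measure V) [μ.IsAddHaarMeasure]

lemma integrable_min_one_div_rpow_div_pow {s : ℝ} (hs : s ∈ Ioo (0:ℝ) 1) :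
    Integrable (fun z : V => min 1 ‖z‖ / ‖z‖ ^ s / ‖z‖ ^ Module.finrank ℝ V) μ := by
  rcases subsingleton_or_nontrivial V with hV | hV
  · refine (integrable_zero V ℝ μ).congr (Eventually.of_forall fun z => ?_)
    simp [Subsingleton.elim z 0]
  set n := Module.finrank ℝ V
  obtain ⟨m, hm⟩ : ∃ m, n = m + 1 := Nat.exists_eq_add_one.mpr Module.finrank_pos
  rw [integrable_fun_norm_addHaar μ (f := fun r => min 1 r / r ^ s / r ^ n),
    ← Ioc_union_Ioi_eq_Ioi zero_le_one]
  have hradial : ∀ y : ℝ, 0 < y →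
      y ^ (n - 1) • (min 1 y / y ^ s / y ^ n) = min 1 y * y ^ (-s - 1) := by
    intro y hy
    rw [hm, Nat.add_sub_cancel, smul_eq_mul, pow_succ, Real.rpow_sub_one hy.ne',
      Real.rpow_neg hy.le]
    field_simp
  refine IntegrableOn.union ?_ ?_
  · refine ((intervalIntegral.intervalIntegrable_rpow' (a := 0) (b := 1) (r := -s)
      (by linarith [hs.2])).1).congr_fun (fun y hy => ?_) measurableSet_Ioc
    rw [hradial y hy.1, min_eq_right hy.2, Real.rpow_sub_one hy.1.ne', mul_div_cancel₀ _ hy.1.ne']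
  · refine (integrableOn_Ioi_rpow_of_lt (a := -s - 1) (by linarith [hs.1]) zero_lt_one).congr_fun
      (fun y hy => ?_) measurableSet_Ioi
    rw [hradial y (zero_lt_one.trans hy), min_eq_left (le_of_lt hy), one_mul]

end Kernel

section Integration

variable {α : Type*} [MeasurableSpace α] {μ : Measure α} {Ω : Set α}

lemma setIntegral_setIntegral_le_of_le_add_mul [SFinite μ] (hΩ : MeasurableSet Ω)
    {F G k : α → α → ℝ} {g : α → ℝ} {c A : ℝ} (hF : ∀ x y, 0 ≤ F x y)
    (hG : IntegrableOn (fun p : α × α => G p.1 p.2) (Ω ×ˢ Ω) (μ.prod μ))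
    (hg : IntegrableOn g Ω μ) (hg0 : ∀ x ∈ Ω, 0 ≤ g x)
    (hk : ∀ x, IntegrableOn (k x) Ω μ) (hkA : ∀ x, ∫ y in Ω, k x y ∂μ ≤ A)
    (hFG : ∀ x ∈ Ω, ∀ y ∈ Ω, F x y ≤ c * G x y + g x * k x y) :
    ∫ x in Ω, ∫ y in Ω, F x y ∂μ ∂μ ≤
      c * ∫ x in Ω, ∫ y in Ω, G x y ∂μ ∂μ + A * ∫ x in Ω, g x ∂μ := by
  have hG' : Integrable (fun p : α × α => G p.1 p.2) ((μ.restrict Ω).prod (μ.restrict Ω)) := by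
    rwa [Measure.prod_restrict]
  have hslice : ∀ᵐ x ∂μ.restrict Ω,
      ∫ y in Ω, F x y ∂μ ≤ c * ∫ y in Ω, G x y ∂μ + A * g x := by
    filter_upwards [hG'.prod_right_ae, ae_restrict_mem hΩ] with x hGx hx
    calc ∫ y in Ω, F x y ∂μ ≤ ∫ y in Ω, (c * G x y + g x * k x y) ∂μ :=
          integral_mono_of_nonneg (.of_forall (hF x)) ((hGx.const_mul c).add ((hk x).const_mul _))
            ((ae_restrict_mem hΩ).mono fun y hy => hFG x hx y hy)
      _ = c * ∫ y in Ω, G x y ∂μ + g x * ∫ y in Ω, k x y ∂μ := by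
          rw [integral_add (hGx.const_mul c) ((hk x).const_mul _), integral_const_mul,
            integral_const_mul]
      _ ≤ c * ∫ y in Ω, G x y ∂μ + A * g x := by
          rw [mul_comm A]
          gcongr
          exacts [hg0 x hx, hkA x]
  calc ∫ x in Ω, ∫ y in Ω, F x y ∂μ ∂μ ≤ ∫ x in Ω, (c * ∫ y in Ω, G x y ∂μ + A * g x) ∂μ :=
        integral_mono_of_nonneg (.of_forall fun x => integral_nonneg (hF x))
          ((hG'.integral_prod_left.const_mul c).add (hg.const_mul A)) hslice
    _ = c * ∫ x in Ω, ∫ y in Ω, G x y ∂μ ∂μ + A * ∫ x in Ω, g x ∂μ := by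
        rw [integral_add (hG'.integral_prod_left.const_mul c) (hg.const_mul A),
          integral_const_mul, integral_const_mul]

lemma setIntegral_Phi_abs_mul_le (O : OrliczFunction) (hΩ : MeasurableSet Ω) {ξ u : α → ℝ}
    (hξ01 : ∀ x ∈ Ω, ξ x ∈ Icc (0:ℝ) 1) (hu : IntegrableOn (fun x => O.Phi |u x|) Ω μ) :
    ∫ x in Ω, O.Phi |ξ x * u x| ∂μ ≤ ∫ x in Ω, O.Phi |u x| ∂μ := by
  refine integral_mono_of_nonneg (.of_forall fun x => O.Phi_nonneg (abs_nonneg _)) hu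
    ((ae_restrict_mem hΩ).mono fun x hx => O.Phi_mono (abs_nonneg _) ?_)
  rw [abs_mul]
  exact mul_le_of_le_one_left (abs_nonneg _)
    ((abs_of_nonneg (hξ01 x hx).1).trans_le (hξ01 x hx).2)

end Integration

lemma abs_mul_sub_mul_le {a b p q : ℝ} (hb : |b| ≤ 1) :
    |a * p - b * q| ≤ |p - q| + |a - b| * |p| :=
  calc |a * p - b * q| = |b * (p - q) + (a - b) * p| := by ring_nf
    _ ≤ |b| * |p - q| + |a - b| * |p| := by rw [← abs_mul, ← abs_mul]; exact abs_add_le _ _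
    _ ≤ |p - q| + |a - b| * |p| := by gcongr; exact mul_le_of_le_one_left (abs_nonneg _) hb

lemma min_one_div_rpow_le_one {s d : ℝ} (hs0 : 0 ≤ s) (hs1 : s ≤ 1) (hd : 0 ≤ d) :
    min 1 d / d ^ s ≤ 1 := by
  rcases hd.eq_or_lt with rfl | hd
  · simp
  rw [div_le_one (Real.rpow_pos_of_pos hd s)]
  rcases le_total d 1 with h | h
  · rw [min_eq_right h]
    simpa using Real.rpow_le_rpow_of_exponent_ge hd h hs1
  · rw [min_eq_left h]
    exact Real.one_le_rpow h hs0

lemma LipschitzOnWith.abs_sub_le_max_mul_min_one {X : Type*} [PseudoMetricSpace X]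
    {ξ : X → ℝ} {L : NNReal} {Ω : Set X} (hξ : LipschitzOnWith L ξ Ω)
    (hξ01 : ∀ x ∈ Ω, ξ x ∈ Icc (0:ℝ) 1) {x y : X} (hx : x ∈ Ω) (hy : y ∈ Ω) :
    |ξ x - ξ y| ≤ max (L : ℝ) 1 * min 1 (dist x y) := by
  rcases le_total (dist x y) 1 with h | h
  · rw [min_eq_right h, ← Real.dist_eq]
    exact (hξ.dist_le_mul x hx y hy).trans (by gcongr; exact le_max_left _ _)
  · rw [min_eq_left h, mul_one]
    obtain ⟨hx0, hx1⟩ := hξ01 x hx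
    obtain ⟨hy0, hy1⟩ := hξ01 y hy
    exact (abs_sub_le_of_nonneg_of_le hx0 hx1 hy0 hy1).trans (le_max_right _ _)

lemma OrliczFunction.Phi_mul_diffQuot_le (O : OrliczFunction) {s d K c₂ cK a b p q : ℝ}
    (hs0 : 0 ≤ s) (hs1 : s ≤ 1) (hd : 0 ≤ d) (hK : 0 ≤ K) (hb : |b| ≤ 1)
    (hab : |a - b| ≤ K * min 1 d) (hc₂0 : 0 ≤ c₂)
    (hc₂ : ∀ t, 0 ≤ t → O.Phi (2 * t) ≤ c₂ * O.Phi t)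
    (hcK : ∀ t, 0 ≤ t → O.Phi (K * t) ≤ cK * O.Phi t) :
    O.Phi (|a * p - b * q| / d ^ s) ≤
      c₂ * O.Phi (|p - q| / d ^ s) + c₂ * cK * (min 1 d / d ^ s) * O.Phi |p| := by
  set ρ := min 1 d / d ^ s
  have hds : 0 ≤ d ^ s := Real.rpow_nonneg hd s
  have hρ0 : 0 ≤ ρ := by positivity
  have hρ1 : ρ ≤ 1 := min_one_div_rpow_le_one hs0 hs1 hd
  have harg : |a * p - b * q| / d ^ s ≤ |p - q| / d ^ s + ρ * (K * |p|) :=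
    calc |a * p - b * q| / d ^ s ≤ (|p - q| + |a - b| * |p|) / d ^ s := by
          gcongr; exact abs_mul_sub_mul_le hb
      _ ≤ (|p - q| + K * min 1 d * |p|) / d ^ s := by gcongr
      _ = |p - q| / d ^ s + ρ * (K * |p|) := by ring
  calc O.Phi (|a * p - b * q| / d ^ s) ≤ O.Phi (|p - q| / d ^ s + ρ * (K * |p|)) :=
        O.Phi_mono (by positivity) harg
    _ ≤ c₂ * O.Phi (|p - q| / d ^ s) + c₂ * O.Phi (ρ * (K * |p|)) :=
        O.Phi_add_le (by positivity) (by positivity) hc₂0 hc₂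
    _ ≤ c₂ * O.Phi (|p - q| / d ^ s) + c₂ * (ρ * (cK * O.Phi |p|)) := by
        gcongr
        exact (O.Phi_mul_le hρ0 hρ1 (by positivity)).trans
          (mul_le_mul_of_nonneg_left (hcK _ (abs_nonneg p)) hρ0)
    _ = c₂ * O.Phi (|p - q| / d ^ s) + c₂ * cK * ρ * O.Phi |p| := by ring

lemma fracModular_nonneg {N : ℕ} (O : OrliczFunction) (s : ℝ) (Ω : Set (E N)) (u : E N → ℝ) :
    0 ≤ fracModular O s Ω u :=
  integral_nonneg fun _ => integral_nonneg fun _ =>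
    div_nonneg (O.Phi_nonneg (by positivity)) (by positivity)

lemma fracModular_mul_le {N : ℕ} (O : OrliczFunction) {s : ℝ} (hs : s ∈ Ioo (0:ℝ) 1)
    {Ω : Set (E N)} (hΩ : MeasurableSet Ω) {ξ u : E N → ℝ} {L : NNReal}
    (hξ : LipschitzOnWith L ξ Ω) (hξ01 : ∀ x ∈ Ω, ξ x ∈ Icc (0:ℝ) 1) {c₂ cK : ℝ}
    (hc₂0 : 0 ≤ c₂) (hc₂ : ∀ t, 0 ≤ t → O.Phi (2 * t) ≤ c₂ * O.Phi t) (hcK0 : 0 ≤ cK)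
    (hcK : ∀ t, 0 ≤ t → O.Phi (max (L : ℝ) 1 * t) ≤ cK * O.Phi t)
    (hu : IntegrableOn (fun x => O.Phi |u x|) Ω)
    (hGu : IntegrableOn
      (fun p : E N × E N => O.Phi (|u p.1 - u p.2| / dist p.1 p.2 ^ s) / dist p.1 p.2 ^ N)
      (Ω ×ˢ Ω)) :
    fracModular O s Ω (fun x => ξ x * u x) ≤ c₂ * fracModular O s Ω u +
      c₂ * cK * (∫ z : E N, min 1 ‖z‖ / ‖z‖ ^ s / ‖z‖ ^ N) * ∫ x in Ω, O.Phi |u x| := by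
  set κ : ℝ → ℝ := fun r => min 1 r / r ^ s / r ^ N
  have hκ : Integrable (fun z : E N => κ ‖z‖) := by
    simpa only [finrank_euclideanSpace_fin] using
      integrable_min_one_div_rpow_div_pow (volume : Measure (E N)) hs
  refine setIntegral_setIntegral_le_of_le_add_mul hΩ
    (fun x y => div_nonneg (O.Phi_nonneg (by positivity)) (by positivity)) hGu hu
    (fun x _ => O.Phi_nonneg (abs_nonneg _)) (k := fun x y => c₂ * cK * κ ‖y - x‖)
    (fun x => (hκ.comp_sub_right x).integrableOn.const_mul _) (fun x => ?_) (fun x hx y hy => ?_)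
  · rw [integral_const_mul]
    gcongr
    calc ∫ y in Ω, κ ‖y - x‖ ≤ ∫ y, κ ‖y - x‖ :=
          setIntegral_le_integral (hκ.comp_sub_right x) (.of_forall fun y => by positivity)
      _ = ∫ z, κ ‖z‖ := integral_sub_right_eq_self (fun z => κ ‖z‖) x
  · have hξy : |ξ y| ≤ 1 := (abs_of_nonneg (hξ01 y hy).1).trans_le (hξ01 y hy).2
    have hpoint := O.Phi_mul_diffQuot_le (p := u x) (q := u y) hs.1.le hs.2.le dist_nonneg
      (by positivity) hξy (hξ.abs_sub_le_max_mul_min_one hξ01 hx hy) hc₂0 hc₂ hcK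
    rw [← dist_eq_norm, dist_comm y x]
    calc O.Phi (|ξ x * u x - ξ y * u y| / dist x y ^ s) / dist x y ^ N
        ≤ (c₂ * O.Phi (|u x - u y| / dist x y ^ s) +
            c₂ * cK * (min 1 (dist x y) / dist x y ^ s) * O.Phi |u x|) / dist x y ^ N := by
          gcongr
      _ = _ := by ring

theorem stmt10 {N : ℕ} (O : OrliczFunction) (s : ℝ) (hs : s ∈ Set.Ioo (0:ℝ) 1)
    (Ω : Set (E N)) (hΩ : IsOpen Ω) (ξ : E N → ℝ) (L : NNReal)
    (hξ : LipschitzOnWith L ξ Ω) (hξ01 : ∀ x ∈ Ω, ξ x ∈ Set.Icc (0:ℝ) 1) :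
    ∃ C > 0, ∀ u : E N → ℝ,
      MeasureTheory.IntegrableOn (fun x => O.Phi |u x|) Ω →
      MeasureTheory.IntegrableOn
        (fun p : E N × E N => O.Phi (|u p.1 - u p.2| / dist p.1 p.2 ^ s) / dist p.1 p.2 ^ N)
        (Ω ×ˢ Ω) →
      (∫ x in Ω, O.Phi |ξ x * u x|) + fracModular O s Ω (fun x => ξ x * u x) ≤
        C * (∫ x in Ω, O.Phi |u x|) + C * fracModular O s Ω u := by
  obtain ⟨c₂, hc₂0, hc₂⟩ := O.exists_Phi_two_mul_le
  obtain ⟨cK, hcK0, hcK⟩ := O.exists_Phi_mul_le (K := max (L : ℝ) 1) (by positivity)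
  set A := ∫ z : E N, min 1 ‖z‖ / ‖z‖ ^ s / ‖z‖ ^ N
  have hA0 : 0 ≤ c₂ * cK * A := by
    have : 0 ≤ A := integral_nonneg fun z => by positivity
    positivity
  refine ⟨1 + c₂ + c₂ * cK * A, by positivity, fun u hu hGu => ?_⟩
  have hmod := fracModular_mul_le O hs hΩ.measurableSet hξ hξ01 hc₂0 hc₂ hcK0 hcK hu hGu
  have hΦ := setIntegral_Phi_abs_mul_le O hΩ.measurableSet hξ01 hu
  have hΦ0 : 0 ≤ ∫ x in Ω, O.Phi |u x| := integral_nonneg fun x => O.Phi_nonneg (abs_nonneg _)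
  nlinarith [fracModular_nonneg O s Ω u]
end
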